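/- Let n = p_1^{α_1}···p_r^{α_r} with r ≥ 2 distinct primes, fix 1 ≤ k ≤ r, and let 1 ≤ β < γ ≤ α_k. If x,y ∈ C_n have orders p_k^β and p_k^γ respectively, then |N([x])| > |N([y])| in the power graph of C_n. Equivalently, (p_k^β − 2φ(p_k^β) + (p_k^{α_k} − p_k^{β−1})∏_{j≠k} p_j^{α_j}) − (p_k^γ − 2φ(p_k^γ) + (p_k^{α_k} − p_k^{γ−1})∏_{j≠k} p_j^{α_j}) = (p_k^{γ−1} − p_k^{β−1})(p_k − 2 + ∏_{j≠k} p_j^{α_j}) > 0. -/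

import Mathlib

/-- The power graph of a group: distinct vertices are adjacent iff
one is a power of the other. -/
def powerGraph (G : Type*) [Group G] : SimpleGraph G where
  Adj x y := x ≠ y ∧ (x ∈ Subgroup.zpowers y ∨ y ∈ Subgroup.zpowers x)
  symm := ⟨fun x y h => ⟨h.1.symm, h.2.symm⟩⟩
  loopless := ⟨fun x hx => hx.1 rfl⟩

/-- `v` lies in a connected component containing a cycle. -/
def InCyclicComp {V : Type*} (Γ : SimpleGraph V) (v : V) : Prop :=
  ∃ w, Γ.Reachable v w ∧ ∃ c : Γ.Walk w w, c.IsCycle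

/-- `S` is a cyclic vertex cutset: `Γ - S` is disconnected with at least two
components containing cycles. -/
def IsCyclicCutset {V : Type*} (Γ : SimpleGraph V) (S : Set V) : Prop :=
  ∃ u v : ↥(Sᶜ), ¬ (Γ.induce Sᶜ).Reachable u v ∧
    InCyclicComp (Γ.induce Sᶜ) u ∧ InCyclicComp (Γ.induce Sᶜ) v

/-- A graph is cyclically separable if it has a cyclic vertex cutset. -/
def CyclicallySeparable {V : Type*} (Γ : SimpleGraph V) : Prop :=
  ∃ S : Set V, IsCyclicCutset Γ S

/-- Vertex connectivity: the least number of vertices whose deletion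
disconnects the graph or reduces it to at most one vertex. -/
noncomputable def vertexConn {V : Type*} (Γ : SimpleGraph V) : ℕ :=
  sInf {k | ∃ S : Set V, S.ncard = k ∧
    (¬ (Γ.induce Sᶜ).Connected ∨ Sᶜ.Subsingleton)}

/-- Cyclic vertex connectivity: the least cardinality of a cyclic vertex
cutset, `∞` if there is none. -/
noncomputable def cyclicVertexConn {V : Type*} (Γ : SimpleGraph V) : ℕ∞ :=
  sInf {k : ℕ∞ | ∃ S : Set V, IsCyclicCutset Γ S ∧ k = (S.ncard : ℕ∞)}

/-- `genClass x` is `[x]`, the set of generators of `⟨x⟩`. -/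
def genClass {G : Type*} [Group G] (x : G) : Set G :=
  {y | Subgroup.zpowers y = Subgroup.zpowers x}

/-- Neighbourhood of a set of vertices. -/
def setNbhd {V : Type*} (Γ : SimpleGraph V) (A : Set V) : Set V :=
  {v | v ∉ A ∧ ∃ a ∈ A, Γ.Adj v a}


/-!
In a finite cyclic group, `a ∈ ⟨b⟩` iff `o(a) ∣ o(b)`, so the neighbourhood of `[x]` in the power
graph consists of the elements whose order is comparable with, but different from, `o(x)` under
divisibility. When `o(x) = p^β` and `o(y) = p^γ` with `β < γ`, every divisor of `p^γ` is comparable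
with `p^β`; hence `N([y]) \ N([x])` is exactly the set of elements of order `p^β`, while all
elements of order `p^γ` lie in `N([x]) \ N([y])`. The two neighbourhoods therefore differ in size
by at least `φ(p^γ) - φ(p^β) > 0`.
-/

open Subgroup

section CyclicGroup

variable {G : Type*} [CommGroup G] [IsCyclic G] [Fintype G]

theorem IsCyclic.mem_zpowers_iff_orderOf_dvd {a b : G} :
    a ∈ zpowers b ↔ orderOf a ∣ orderOf b := by
  refine ⟨orderOf_dvd_of_mem_zpowers, fun h => ?_⟩
  -- `⟨b⟩` and the `o(b)`-torsion subgroup have the same order `o(b)`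
  have hker : zpowers b = (powMonoidHom (orderOf b) : G →* G).ker := by
    apply eq_of_le_of_card_ge
    · simp [zpowers_le, pow_orderOf_eq_one]
    · rw [IsCyclic.card_powMonoidHom_ker, Nat.card_zpowers,
        Nat.gcd_eq_right (orderOf_dvd_natCard b)]
  rwa [hker, MonoidHom.mem_ker, powMonoidHom_apply, ← orderOf_dvd_iff_pow_eq_one]

theorem IsCyclic.zpowers_eq_zpowers_iff {a b : G} :
    zpowers a = zpowers b ↔ orderOf a = orderOf b := by
  rw [le_antisymm_iff, zpowers_le, zpowers_le, IsCyclic.mem_zpowers_iff_orderOf_dvd,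
    IsCyclic.mem_zpowers_iff_orderOf_dvd]
  exact ⟨fun h => Nat.dvd_antisymm h.1 h.2, fun h => ⟨h.dvd, h.symm.dvd⟩⟩

theorem setNbhd_powerGraph_genClass (x : G) :
    setNbhd (powerGraph G) (genClass x) =
      {v | orderOf v ≠ orderOf x ∧ (orderOf v ∣ orderOf x ∨ orderOf x ∣ orderOf v)} := by
  ext v
  simp only [setNbhd, genClass, powerGraph, Set.mem_ofPred_eq, IsCyclic.zpowers_eq_zpowers_iff,
    IsCyclic.mem_zpowers_iff_orderOf_dvd]
  constructor
  · rintro ⟨hv, a, ha, -, hdvd⟩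
    exact ⟨hv, ha ▸ hdvd⟩
  · rintro ⟨hv, hdvd⟩
    exact ⟨hv, x, rfl, fun h => hv (h ▸ rfl), hdvd⟩

theorem ncard_setOf_orderOf_eq (x : G) :
    {v : G | orderOf v = orderOf x}.ncard = (orderOf x).totient := by
  classical
  rw [← IsCyclic.card_orderOf_eq_totient orderOf_dvd_card, ← Set.ncard_coe_finset]
  simp

theorem ncard_setNbhd_genClass_add_totient_le {x y : G} (hxy : orderOf x ∣ orderOf y)
    (hne : orderOf x ≠ orderOf y) (hchain : ∀ d, d ∣ orderOf y → d ∣ orderOf x ∨ orderOf x ∣ d) :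
    (setNbhd (powerGraph G) (genClass y)).ncard + (orderOf y).totient ≤
      (setNbhd (powerGraph G) (genClass x)).ncard + (orderOf x).totient := by
  rw [setNbhd_powerGraph_genClass, setNbhd_powerGraph_genClass]
  set A := {v : G | orderOf v ≠ orderOf x ∧ (orderOf v ∣ orderOf x ∨ orderOf x ∣ orderOf v)}
  set B := {v : G | orderOf v ≠ orderOf y ∧ (orderOf v ∣ orderOf y ∨ orderOf y ∣ orderOf v)}
  have hBA : B \ A = {v | orderOf v = orderOf x} := by
    ext v
    simp only [A, B, Set.mem_sdiff, Set.mem_ofPred_eq]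
    constructor
    · rintro ⟨⟨-, hvy | hyv⟩, hvA⟩
      · by_contra hvx
        exact hvA ⟨hvx, hchain _ hvy⟩
      · by_contra hvx
        exact hvA ⟨hvx, Or.inr (hxy.trans hyv)⟩
    · intro hvx
      exact ⟨⟨hvx ▸ hne, Or.inl (hvx ▸ hxy)⟩, fun h => h.1 hvx⟩
  have hAB : {v | orderOf v = orderOf y} ⊆ A \ B := fun v hvy =>
    ⟨⟨hvy ▸ hne.symm, Or.inr (hvy ▸ hxy)⟩, fun h => h.1 hvy⟩
  have hB := Set.ncard_inter_add_ncard_sdiff_eq_ncard B A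
  have hA := Set.ncard_inter_add_ncard_sdiff_eq_ncard A B
  have hAB_card := Set.ncard_le_ncard hAB
  rw [hBA, ncard_setOf_orderOf_eq] at hB
  rw [ncard_setOf_orderOf_eq] at hAB_card
  rw [Set.inter_comm] at hB
  omega

end CyclicGroup

theorem Nat.totient_prime_pow_lt_totient_prime_pow {p β γ : ℕ} (hp : p.Prime) (hβ : 1 ≤ β)
    (hβγ : β < γ) : (p ^ β).totient < (p ^ γ).totient := by
  rw [Nat.totient_prime_pow hp (by omega), Nat.totient_prime_pow hp (by omega)]
  exact Nat.mul_lt_mul_of_pos_right (Nat.pow_lt_pow_right hp.one_lt (by omega))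
    (Nat.sub_pos_of_lt hp.one_lt)

theorem Nat.dvd_or_dvd_of_dvd_prime_pow {p d γ : ℕ} (hp : p.Prime) (hd : d ∣ p ^ γ) (β : ℕ) :
    d ∣ p ^ β ∨ p ^ β ∣ d := by
  obtain ⟨i, -, rfl⟩ := (Nat.dvd_prime_pow hp).1 hd
  rcases le_total i β with h | h
  exacts [Or.inl (pow_dvd_pow p h), Or.inr (pow_dvd_pow p h)]

theorem neighbourhood_formula_sub {q β γ : ℕ} (hq : q.Prime) (hβ : 1 ≤ β) (hγ : 1 ≤ γ)
    (a : ℕ) (P : ℤ) :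
    (((q ^ β : ℤ) - 2 * Nat.totient (q ^ β) + ((q : ℤ) ^ a - (q : ℤ) ^ (β - 1)) * P)
      - ((q ^ γ : ℤ) - 2 * Nat.totient (q ^ γ) + ((q : ℤ) ^ a - (q : ℤ) ^ (γ - 1)) * P)
      = ((q : ℤ) ^ (γ - 1) - (q : ℤ) ^ (β - 1)) * ((q : ℤ) - 2 + P)) := by
  obtain ⟨b, rfl⟩ : ∃ b, β = b + 1 := ⟨β - 1, by omega⟩
  obtain ⟨g, rfl⟩ : ∃ g, γ = g + 1 := ⟨γ - 1, by omega⟩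
  rw [Nat.totient_prime_pow_succ hq, Nat.totient_prime_pow_succ hq]
  push_cast [Nat.cast_sub hq.one_le]
  ring

theorem neighbourhood_formula_sub_pos {q β γ : ℕ} (hq : 2 ≤ q) (hβ : 1 ≤ β) (hβγ : β < γ)
    {P : ℤ} (hP : 0 < P) :
    0 < ((q : ℤ) ^ (γ - 1) - (q : ℤ) ^ (β - 1)) * ((q : ℤ) - 2 + P) := by
  have hpow : (q : ℤ) ^ (β - 1) < (q : ℤ) ^ (γ - 1) :=
    pow_lt_pow_right₀ (by exact_mod_cast hq) (by omega)
  have hq' : (2 : ℤ) ≤ q := by exact_mod_cast hq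
  exact mul_pos (by linarith) (by linarith)

theorem stmt4_general (n r : ℕ) [NeZero n] (p α : Fin r → ℕ)
    (hp : ∀ i, (p i).Prime)
    (k : Fin r) (β γ : ℕ) (hβ : 1 ≤ β) (hβγ : β < γ)
    (x y : Multiplicative (ZMod n))
    (hx : orderOf x = p k ^ β) (hy : orderOf y = p k ^ γ) :
    (setNbhd (powerGraph (Multiplicative (ZMod n))) (genClass y)).ncard
      < (setNbhd (powerGraph (Multiplicative (ZMod n))) (genClass x)).ncard ∧
    (((p k ^ β : ℤ) - 2 * Nat.totient (p k ^ β)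
        + ((p k : ℤ) ^ α k - (p k : ℤ) ^ (β - 1)) *
            (∏ j ∈ Finset.univ.erase k, (p j : ℤ) ^ α j))
      - ((p k ^ γ : ℤ) - 2 * Nat.totient (p k ^ γ)
        + ((p k : ℤ) ^ α k - (p k : ℤ) ^ (γ - 1)) *
            (∏ j ∈ Finset.univ.erase k, (p j : ℤ) ^ α j))
      = ((p k : ℤ) ^ (γ - 1) - (p k : ℤ) ^ (β - 1)) *
          ((p k : ℤ) - 2 + ∏ j ∈ Finset.univ.erase k, (p j : ℤ) ^ α j)) ∧
    0 < ((p k : ℤ) ^ (γ - 1) - (p k : ℤ) ^ (β - 1)) *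
          ((p k : ℤ) - 2 + ∏ j ∈ Finset.univ.erase k, (p j : ℤ) ^ α j) := by
  have hP : 0 < ∏ j ∈ Finset.univ.erase k, (p j : ℤ) ^ α j :=
    Finset.prod_pos fun j _ => pow_pos (by exact_mod_cast (hp j).pos) _
  refine ⟨?_, neighbourhood_formula_sub (hp k) hβ (by omega) _ _,
    neighbourhood_formula_sub_pos (hp k).two_le hβ hβγ hP⟩
  have hle := ncard_setNbhd_genClass_add_totient_le (x := x) (y := y)
    (by rw [hx, hy]; exact pow_dvd_pow _ hβγ.le)
    (by rw [hx, hy]; exact (Nat.pow_right_injective (hp k).two_le).ne hβγ.ne)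
    (by rw [hx]; exact fun d hd => Nat.dvd_or_dvd_of_dvd_prime_pow (hp k) (hy ▸ hd) β)
  rw [hx, hy] at hle
  have hlt := Nat.totient_prime_pow_lt_totient_prime_pow (hp k) hβ hβγ
  omega

/-- Comparison of neighbourhood sizes for elements of orders p_k^β and p_k^γ. -/
theorem stmt4 (n r : ℕ) [NeZero n] (hr : 2 ≤ r) (p α : Fin r → ℕ)
    (hp : ∀ i, (p i).Prime) (hmono : StrictMono p) (hα : ∀ i, 1 ≤ α i)
    (hn : n = ∏ i, p i ^ α i)
    (k : Fin r) (β γ : ℕ) (hβ : 1 ≤ β) (hβγ : β < γ) (hγ : γ ≤ α k)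
    (x y : Multiplicative (ZMod n))
    (hx : orderOf x = p k ^ β) (hy : orderOf y = p k ^ γ) :
    (setNbhd (powerGraph (Multiplicative (ZMod n))) (genClass y)).ncard
      < (setNbhd (powerGraph (Multiplicative (ZMod n))) (genClass x)).ncard ∧
    (((p k ^ β : ℤ) - 2 * Nat.totient (p k ^ β)
        + ((p k : ℤ) ^ α k - (p k : ℤ) ^ (β - 1)) *
            (∏ j ∈ Finset.univ.erase k, (p j : ℤ) ^ α j))
      - ((p k ^ γ : ℤ) - 2 * Nat.totient (p k ^ γ)
        + ((p k : ℤ) ^ α k - (p k : ℤ) ^ (γ - 1)) *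
            (∏ j ∈ Finset.univ.erase k, (p j : ℤ) ^ α j))
      = ((p k : ℤ) ^ (γ - 1) - (p k : ℤ) ^ (β - 1)) *
          ((p k : ℤ) - 2 + ∏ j ∈ Finset.univ.erase k, (p j : ℤ) ^ α j)) ∧
    0 < ((p k : ℤ) ^ (γ - 1) - (p k : ℤ) ^ (β - 1)) *
          ((p k : ℤ) - 2 + ∏ j ∈ Finset.univ.erase k, (p j : ℤ) ^ α j) :=
  stmt4_general n r p α hp k β γ hβ hβγ x y hx hy
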